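/- There is a label-preserving bijection between the saturated chains starting at 0̂ of the pointed partition poset Π_n^• (labeled by λ_•, or equivalently λ_{•2}) and the saturated chains starting at 0̂ of the weighted partition poset Π_n^w (labeled by λ_w): corresponding chains have identical words of labels in the common underlying label set {(a,b)^u : 1 ≤ a < b ≤ n, u ∈ {0,1}}. -/

import Mathlib

open Finset

open scoped BigOperators Classical

/-! ## Generic machinery for edge labelings of posets presented by cover relations -/

section Chains

variable {α : Type*} {L : Type*}

/-- The word of labels read along a list of poset elements. -/
def wordOf (lab : α → α → L) : List α → List L
  | x :: y :: rest => lab x y :: wordOf lab (y :: rest)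
  | _ => []

/-- `c` is a saturated chain from `x` to `y` with respect to the cover relation `cov`;
in a graded poset these are exactly the maximal chains of the interval `[x, y]`. -/
def IsSatChain (cov : α → α → Prop) (x y : α) (c : List α) : Prop :=
  c.Chain' cov ∧ c.head? = some x ∧ c.getLast? = some y

/-- A word of labels is increasing if consecutive labels strictly increase. -/
def IncWord (lt : L → L → Prop) (w : List L) : Prop := w.Chain' lt

/-- A word of labels is ascent-free if no consecutive pair of labels strictly increases. -/
def AscFree (lt : L → L → Prop) (w : List L) : Prop := w.Chain' fun a b => ¬ lt a b

/-- The partial order generated by a cover relation. -/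
def leOf (cov : α → α → Prop) : α → α → Prop := Relation.ReflTransGen cov

/-- The strict order generated by a cover relation. -/
def ltOf (cov : α → α → Prop) (a b : α) : Prop := leOf cov a b ∧ a ≠ b

/-- An ER-labeling: every closed interval has a unique increasing maximal chain. -/
def IsERLabeling (cov : α → α → Prop) (lab : α → α → L) (lt : L → L → Prop) : Prop :=
  ∀ x y, leOf cov x y → ∃! c, IsSatChain cov x y c ∧ IncWord lt (wordOf lab c)

/-- The rank two switching property: in every rank-two interval whose increasing chain
has word of labels `ab`, there is a unique chain with word of labels `ba`. -/
def RankTwoSwitch (cov : α → α → Prop) (lab : α → α → L) (lt : L → L → Prop) : Prop :=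
  ∀ x y c a b, IsSatChain cov x y c → IncWord lt (wordOf lab c) → wordOf lab c = [a, b] →
    ∃! c', IsSatChain cov x y c' ∧ wordOf lab c' = [b, a]

/-- In every interval, distinct ascent-free maximal chains have distinct label words. -/
def AscFreeInj (cov : α → α → Prop) (lab : α → α → L) (lt : L → L → Prop) : Prop :=
  ∀ x y c c', IsSatChain cov x y c → IsSatChain cov x y c' →
    AscFree lt (wordOf lab c) → AscFree lt (wordOf lab c') →
    wordOf lab c = wordOf lab c' → c = c'

/-- An EW-labeling. -/
def IsEWLabeling (cov : α → α → Prop) (lab : α → α → L) (lt : L → L → Prop) : Prop :=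
  IsERLabeling cov lab lt ∧ RankTwoSwitch cov lab lt ∧ AscFreeInj cov lab lt

/-- An EL-labeling: every closed interval has a unique increasing maximal chain,
which lexicographically precedes every other maximal chain of the interval. -/
def IsELLabeling (cov : α → α → Prop) (lab : α → α → L) (lt : L → L → Prop) : Prop :=
  ∀ x y, leOf cov x y →
    ∃ c, (IsSatChain cov x y c ∧ IncWord lt (wordOf lab c)) ∧
      ∀ c', IsSatChain cov x y c' → c' ≠ c →
        ¬ IncWord lt (wordOf lab c') ∧ List.Lex lt (wordOf lab c) (wordOf lab c')

end Chains

/-! ## Möbius functions and Whitney numbers -/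

section Whitney

variable {α : Type*} {β : Type*}

/-- Auxiliary Möbius function computed with fuel; for an element of rank `k` of a
graded poset, fuel `k` computes the one-variable Möbius function `μ(0̂, ·)`. -/
noncomputable def muAux (ltr : α → α → Prop) (bot : α) : ℕ → α → ℤ
  | 0, x => if x = bot then 1 else 0
  | k + 1, x => if x = bot then 1 else - ∑ᶠ (y : α) (_ : ltr y x), muAux ltr bot k y

/-- The one-variable Möbius function `μ(0̂, x)` of a graded poset presented by its
cover relation `cov`, minimum `bot` and rank function `rk`. -/
noncomputable def muBot (cov : α → α → Prop) (bot : α) (rk : α → ℕ) (x : α) : ℤ :=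
  muAux (ltOf cov) bot (rk x) x

/-- The `k`-th Whitney number of the first kind. -/
noncomputable def whitney1 (cov : α → α → Prop) (bot : α) (rk : α → ℕ) (k : ℕ) : ℤ :=
  ∑ᶠ (x : α) (_ : rk x = k), muBot cov bot rk x

/-- The `k`-th Whitney number of the second kind. -/
noncomputable def whitney2 (rk : α → ℕ) (k : ℕ) : ℕ :=
  Nat.card {x : α // rk x = k}

/-- Two graded posets are Whitney duals if their Whitney numbers of the first and second
kind are swapped (up to sign). -/
def IsWhitneyDual (covP : α → α → Prop) (botP : α) (rkP : α → ℕ)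
    (covQ : β → β → Prop) (botQ : β) (rkQ : β → ℕ) : Prop :=
  ∀ k, (whitney1 covP botP rkP k).natAbs = whitney2 rkQ k ∧
       (whitney1 covQ botQ rkQ k).natAbs = whitney2 rkP k

/-- Two graded posets are Whitney twins if they have the same Whitney numbers of the first
and of the second kind. -/
def IsWhitneyTwin (covP : α → α → Prop) (botP : α) (rkP : α → ℕ)
    (covQ : β → β → Prop) (botQ : β) (rkQ : β → ℕ) : Prop :=
  ∀ k, whitney1 covP botP rkP k = whitney1 covQ botQ rkQ k ∧ whitney2 rkP k = whitney2 rkQ k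

/-- `(cov, bot, rk)` presents a graded poset with minimum `bot`. -/
def IsGradedPoset (cov : α → α → Prop) (bot : α) (rk : α → ℕ) : Prop :=
  (∀ x, leOf cov bot x) ∧ rk bot = 0 ∧ ∀ x y, cov x y → rk y = rk x + 1

/-- A graded poset has a Whitney dual. -/
def HasWhitneyDual {γ : Type} (cov : γ → γ → Prop) (bot : γ) (rk : γ → ℕ) : Prop :=
  ∃ (β : Type) (_ : Finite β) (covQ : β → β → Prop) (botQ : β) (rkQ : β → ℕ),
    IsGradedPoset covQ botQ rkQ ∧ IsWhitneyDual cov bot rk covQ botQ rkQ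

/-- Isomorphism of the posets generated by two cover relations. -/
def CovPosetIso (covP : α → α → Prop) (covQ : β → β → Prop) : Prop :=
  ∃ e : α ≃ β, ∀ x y, leOf covP x y ↔ leOf covQ (e x) (e y)

end Whitney

/-! ## The label posets `Λₙʷ` and `Λₙ•` (strict order relations)

Labels are triples `(a, b, u)` with `a < b` in `[n]` and `u ∈ {0,1}` (encoded as `Bool`). -/

/-- The strict order of `Λₙʷ = Γ₁ ⊕ ⋯ ⊕ Γ_{n-1}` where `Γ_a` carries the product order
`(a,b)ᵘ ≤ (a,c)ᵛ ↔ b ≤ c ∧ u ≤ v`. -/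
def ltLw (x y : ℕ × ℕ × Bool) : Prop :=
  x.1 < y.1 ∨ (x.1 = y.1 ∧ x.2.1 ≤ y.2.1 ∧ x.2.2 ≤ y.2.2 ∧ x.2 ≠ y.2)

/-- The strict order of `Λₙ• = A₁ ⊕ C₁ ⊕ ⋯ ⊕ A_{n-1} ⊕ C_{n-1}` where `A_a` is the
antichain of the `(a,b)⁰` and `C_a` is the chain of the `(a,b)¹` ordered by `b`. -/
def ltLp (x y : ℕ × ℕ × Bool) : Prop :=
  x.1 < y.1 ∨ (x.1 = y.1 ∧
    ((x.2.2 = false ∧ y.2.2 = true) ∨ (x.2.2 = true ∧ y.2.2 = true ∧ x.2.1 < y.2.1)))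

/-! ## Pointed and weighted partition posets -/

/-- The minimum of a finite set of naturals (`0` for the empty set). -/
def minB (B : Finset ℕ) : ℕ := WithTop.untopD 0 B.min

/-- Pointed partitions of the ground set `A`: partitions of `A` into blocks, each block
carrying a distinguished (pointed) element.  A pointed block is a pair `(B, p)` with `p ∈ B`. -/
abbrev PPart (A : Finset ℕ) : Type :=
  {π : Finset (Finset ℕ × ℕ) //
    (∀ b ∈ π, b.2 ∈ b.1) ∧
    (∀ b ∈ π, ∀ b' ∈ π, b ≠ b' → Disjoint b.1 b'.1) ∧
    π.biUnion Prod.fst = A}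

/-- The cover relation of the pointed partition poset: merge two pointed blocks, the merged
block being pointed at the pointed element of one of the two. -/
def covPP {A : Finset ℕ} (π π' : PPart A) : Prop :=
  ∃ b1 ∈ π.1, ∃ b2 ∈ π.1, minB b1.1 < minB b2.1 ∧
    ∃ p : ℕ, (p = b1.2 ∨ p = b2.2) ∧
      π'.1 = insert (b1.1 ∪ b2.1, p) ((π.1.erase b1).erase b2)

/-- The labeling `λ•` (as a bare label map): the cover `u`-merging blocks `A, B` with
`min A < min B` gets the label `(min A, min B, u)`, where `u = 1` exactly when the merged
block is pointed at the pointed element of `A`. -/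
noncomputable def labPP {A : Finset ℕ} (π π' : PPart A) : ℕ × ℕ × Bool :=
  let olds := π.1 \ π'.1
  let mins := olds.image (fun b => minB b.1)
  (WithTop.untopD 0 mins.min, WithBot.unbotD 0 mins.max,
    if ∃ b ∈ olds, minB b.1 = WithTop.untopD 0 mins.min ∧ ∃ d ∈ π'.1 \ π.1, d.2 = b.2
      then true else false)

/-- The minimum of the pointed partition poset: all blocks are pointed singletons. -/
def botPP (A : Finset ℕ) : PPart A :=
  ⟨A.image fun i => ({i}, i), by
    refine ⟨?_, ?_, ?_⟩
    · intro b hb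
      obtain ⟨i, -, rfl⟩ := Finset.mem_image.1 hb
      exact Finset.mem_singleton_self i
    · intro b hb b' hb' hne
      obtain ⟨i, -, rfl⟩ := Finset.mem_image.1 hb
      obtain ⟨j, -, rfl⟩ := Finset.mem_image.1 hb'
      have hij : i ≠ j := fun h => hne (by rw [h])
      simp [Finset.disjoint_left, hij]
    · ext x
      simp⟩

/-- The rank function of the pointed partition poset. -/
def rkPP {A : Finset ℕ} (π : PPart A) : ℕ := A.card - π.1.card

/-- Weighted partitions of the ground set `A`: partitions of `A` into blocks, each block `B`
carrying a weight `v` with `0 ≤ v ≤ |B| - 1`. -/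
abbrev WPart (A : Finset ℕ) : Type :=
  {π : Finset (Finset ℕ × ℕ) //
    (∀ b ∈ π, b.2 < b.1.card) ∧
    (∀ b ∈ π, ∀ b' ∈ π, b ≠ b' → Disjoint b.1 b'.1) ∧
    π.biUnion Prod.fst = A}

/-- The cover relation of the weighted partition poset: merge blocks `A^v, B^w` into
`(A ∪ B)^(v+w+u)` for some `u ∈ {0,1}`. -/
def covWP {A : Finset ℕ} (π π' : WPart A) : Prop :=
  ∃ b1 ∈ π.1, ∃ b2 ∈ π.1, minB b1.1 < minB b2.1 ∧ ∃ u : Bool,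
    π'.1 = insert (b1.1 ∪ b2.1, b1.2 + b2.2 + (if u then 1 else 0)) ((π.1.erase b1).erase b2)

/-- The labeling `λ_w` (as a bare label map): the cover merging `A^v, B^w` with
`min A < min B` into `(A ∪ B)^(v+w+u)` gets the label `(min A, min B, u)`. -/
noncomputable def labWP {A : Finset ℕ} (π π' : WPart A) : ℕ × ℕ × Bool :=
  let olds := π.1 \ π'.1
  let mins := olds.image (fun b => minB b.1)
  (WithTop.untopD 0 mins.min, WithBot.unbotD 0 mins.max,
    if (π'.1 \ π.1).sum Prod.snd = olds.sum Prod.snd + 1 then true else false)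

/-- The minimum of the weighted partition poset: all blocks singletons of weight `0`. -/
def botWP (A : Finset ℕ) : WPart A :=
  ⟨A.image fun i => ({i}, 0), by
    refine ⟨?_, ?_, ?_⟩
    · intro b hb
      obtain ⟨i, -, rfl⟩ := Finset.mem_image.1 hb
      simp
    · intro b hb b' hb' hne
      obtain ⟨i, -, rfl⟩ := Finset.mem_image.1 hb
      obtain ⟨j, -, rfl⟩ := Finset.mem_image.1 hb'
      have hij : i ≠ j := fun h => hne (by rw [h])
      simp [Finset.disjoint_left, hij]
    · ext x
      simp⟩

/-- The rank function of the weighted partition poset. -/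
def rkWP {A : Finset ℕ} (π : WPart A) : ℕ := A.card - π.1.card
/-! ## Bicolored binary trees and Lyndon forests -/

/-- Planar binary trees with `ℕ`-labeled leaves and `Bool`-colored internal vertices
(`false` = color 0, `true` = color 1). -/
inductive BT : Type
  | leaf : ℕ → BT
  | node : Bool → BT → BT → BT
deriving DecidableEq

namespace BT

/-- The valency: the minimum leaf label of a tree. -/
def nu : BT → ℕ
  | leaf a => a
  | node _ l r => min l.nu r.nu

/-- The set of leaf labels of a tree. -/
def leaves : BT → Finset ℕ
  | leaf a => {a}
  | node _ l r => l.leaves ∪ r.leaves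

/-- The number of internal vertices of a tree. -/
def internals : BT → ℕ
  | leaf _ => 0
  | node _ l r => l.internals + r.internals + 1

/-- A tree is normalized if its leaf labels are distinct and every internal vertex has the
same valency as its left child. -/
def normalized : BT → Prop
  | leaf _ => True
  | node _ l r => l.normalized ∧ r.normalized ∧ Disjoint l.leaves r.leaves ∧ l.nu < r.nu

/-- The pointed Lyndon condition: at every internal vertex `v` with internal left child,
`color (L v) ≥ color v`, and if `color (L v) = color v = 1` then `v` is a Lyndon vertex,
i.e. `ν (R (L v)) > ν (R v)`. -/
def pLyn : BT → Prop
  | leaf _ => True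
  | node c l r => l.pLyn ∧ r.pLyn ∧
      (match l with
       | leaf _ => True
       | node c' _ r' => c ≤ c' ∧ ((c' = c ∧ c = true) → r.nu < r'.nu))

/-- The bicolored Lyndon condition: every internal vertex with internal left child is
Lyndon (`ν (R (L v)) > ν (R v)`) or satisfies `color (L v) > color v`. -/
def wLyn : BT → Prop
  | leaf _ => True
  | node c l r => l.wLyn ∧ r.wLyn ∧
      (match l with
       | leaf _ => True
       | node c' _ r' => r.nu < r'.nu ∨ c < c')

/-- The pointed element of a bicolored tree: a `1`-colored vertex keeps the point of its
left subtree and a `0`-colored vertex keeps the point of its right subtree. -/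
def ppt : BT → ℕ
  | leaf a => a
  | node c l r => if c then l.ppt else r.ppt

end BT

/-- `u`-merging of two pointed Lyndon trees: create a new root of color `u` with the two
trees as subtrees, then repeatedly slide the new vertex together with its right subtree
past its left child until the pointed Lyndon condition holds at the new vertex. -/
def mergeP (u : Bool) : BT → BT → BT
  | BT.leaf a, t2 => BT.node u (BT.leaf a) t2
  | BT.node c a b, t2 =>
      if u ≤ c ∧ ((c = true ∧ u = true) → t2.nu < b.nu)
      then BT.node u (BT.node c a b) t2
      else BT.node c (mergeP u a t2) b

/-- `u`-merging of two bicolored Lyndon trees: create a new root of color `u` with the two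
trees as subtrees, then repeatedly slide the new vertex together with its right subtree
past its left child until the bicolored Lyndon condition holds at the new vertex. -/
def mergeW (u : Bool) : BT → BT → BT
  | BT.leaf a, t2 => BT.node u (BT.leaf a) t2
  | BT.node c a b, t2 =>
      if t2.nu < b.nu ∨ u < c
      then BT.node u (BT.node c a b) t2
      else BT.node c (mergeW u a t2) b

/-- A valid forest on the ground set `[n]`, each tree normalized and satisfying `P`, the
trees having pairwise disjoint leaf sets which together cover `[n] = {1, …, n}`. -/
def ForestValid (n : ℕ) (P : BT → Prop) (F : Finset BT) : Prop :=
  (∀ t ∈ F, t.normalized ∧ P t) ∧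
  (∀ t ∈ F, ∀ t' ∈ F, t ≠ t' → Disjoint t.leaves t'.leaves) ∧
  F.biUnion BT.leaves = Finset.Icc 1 n

/-- The set of pointed Lyndon forests on `[n]`. -/
abbrev FLynP (n : ℕ) : Type := {F : Finset BT // ForestValid n BT.pLyn F}

/-- The set of bicolored Lyndon forests on `[n]`. -/
abbrev FLynW (n : ℕ) : Type := {F : Finset BT // ForestValid n BT.wLyn F}

/-- The cover relation on forests: `u`-merge two of the trees (the one with smaller minimum
leaf label going to the left). -/
def covForest (merge : Bool → BT → BT → BT) (F F' : Finset BT) : Prop :=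
  ∃ t1 ∈ F, ∃ t2 ∈ F, t1.nu < t2.nu ∧ ∃ u : Bool,
    F' = insert (merge u t1 t2) ((F.erase t1).erase t2)

/-- The cover relation of the poset of pointed Lyndon forests `FLyn_n^•`. -/
def covFP {n : ℕ} (F F' : FLynP n) : Prop := covForest mergeP F.1 F'.1

/-- The cover relation of the poset of bicolored Lyndon forests `FLyn_n^w`. -/
def covFW {n : ℕ} (F F' : FLynW n) : Prop := covForest mergeW F.1 F'.1

/-- The forest of `n` isolated leaves. -/
def botForest (n : ℕ) : Finset BT := (Finset.Icc 1 n).image BT.leaf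

theorem botForest_valid (n : ℕ) (P : BT → Prop) (hP : ∀ a, P (BT.leaf a)) :
    ForestValid n P (botForest n) := by
  refine ⟨?_, ?_, ?_⟩
  · intro t ht
    obtain ⟨i, -, rfl⟩ := Finset.mem_image.1 ht
    exact ⟨trivial, hP i⟩
  · intro t ht t' ht' hne
    obtain ⟨i, -, rfl⟩ := Finset.mem_image.1 ht
    obtain ⟨j, -, rfl⟩ := Finset.mem_image.1 ht'
    have hij : i ≠ j := fun h => hne (by rw [h])
    simp only [BT.leaves]
    simp [Finset.disjoint_left, hij]
  · ext x
    simp [botForest, BT.leaves]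

/-- The minimum of the poset of pointed Lyndon forests. -/
def botFP (n : ℕ) : FLynP n := ⟨botForest n, botForest_valid n _ fun _ => trivial⟩

/-- The minimum of the poset of bicolored Lyndon forests. -/
def botFW (n : ℕ) : FLynW n := ⟨botForest n, botForest_valid n _ fun _ => trivial⟩

/-- The rank of a forest: its total number of internal vertices. -/
def rkForest (F : Finset BT) : ℕ := F.sum BT.internals

/-- The rank function of `FLyn_n^•`. -/
def rkFP {n : ℕ} (F : FLynP n) : ℕ := rkForest F.1

/-- The rank function of `FLyn_n^w`. -/
def rkFW {n : ℕ} (F : FLynW n) : ℕ := rkForest F.1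

/-! ## The Whitney dual construction `R_λ(P)` -/

section RPoset

variable {α : Type*} {L : Type*}

/-- Swap the leftmost ascent of a word of labels. -/
noncomputable def swapFirstAscent (lt : L → L → Prop) : List L → List L
  | a :: b :: rest => if lt a b then b :: a :: rest else a :: swapFirstAscent lt (b :: rest)
  | w => w

/-- Sort a word of labels by repeatedly swapping its leftmost ascent until it is
ascent-free. -/
noncomputable def sortWord (lt : L → L → Prop) (w : List L) : List L :=
  (swapFirstAscent lt)^[w.length * w.length] w

/-- The underlying set of the Whitney dual `R_λ(P)`: pairs `(x, w)` where `w` is the label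
word of an ascent-free saturated chain from `0̂` to `x`. -/
abbrev RPoset (cov : α → α → Prop) (lab : α → α → L) (lt : L → L → Prop) (bot : α) : Type _ :=
  {q : α × List L //
    ∃ c, IsSatChain cov bot q.1 c ∧ AscFree lt (wordOf lab c) ∧ wordOf lab c = q.2}

/-- The cover relation of `R_λ(P)`: `(x, w) ⋖ (y, u)` iff `x ⋖ y` and `u` is obtained by
sorting the label of `x ⋖ y` into `w`. -/
def covR (cov : α → α → Prop) (lab : α → α → L) (lt : L → L → Prop) (bot : α)
    (p q : RPoset cov lab lt bot) : Prop :=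
  cov p.1.1 q.1.1 ∧ q.1.2 = sortWord lt (p.1.2 ++ [lab p.1.1 q.1.1])

end RPoset

/-! ## Reiner's poset of rooted spanning forests -/

/-- A rooted spanning forest on `[n]`, encoded by its parent function: `f i` is the parent
of the vertex `i` (`f i = i` for roots), vertices outside `[n]` being fixed, and every
vertex reaching a root after finitely many steps (acyclicity). -/
def SFvalid (n : ℕ) (f : ℕ → ℕ) : Prop :=
  (∀ i ∈ Finset.Icc 1 n, f i ∈ Finset.Icc 1 n) ∧
  (∀ i, i ∉ Finset.Icc 1 n → f i = i) ∧
  (∀ i, ∃ k, f^[k + 1] i = f^[k] i)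

/-- Reiner's poset `SF_n` of rooted spanning forests of the complete graph on `[n]`. -/
abbrev SF (n : ℕ) : Type := {f : ℕ → ℕ // SFvalid n f}

/-- The cover relation of `SF_n`: add an edge between the roots of two trees, one of the
two roots becoming the root of the merged tree. -/
def covSF {n : ℕ} (f g : SF n) : Prop :=
  ∃ r1 ∈ Finset.Icc 1 n, ∃ r2 ∈ Finset.Icc 1 n, r1 ≠ r2 ∧
    f.1 r1 = r1 ∧ f.1 r2 = r2 ∧
    (g.1 = Function.update f.1 r1 r2 ∨ g.1 = Function.update f.1 r2 r1)

/-- The rank of a rooted spanning forest: its number of edges. -/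
def rkSF {n : ℕ} (f : SF n) : ℕ := ((Finset.Icc 1 n).filter fun i => f.1 i ≠ i).card
/-! ## Further constructions used in particular statements -/

/-- The map `Φ` on underlying finsets: a pointed block `(B, q)` of a pointed partition
above `α` is sent to the set of minima of the `α`-blocks contained in `B`, pointed at the
minimum of the `α`-block containing `q`. -/
noncomputable def PhiMap (af : Finset (Finset ℕ × ℕ)) (pf : Finset (Finset ℕ × ℕ)) :
    Finset (Finset ℕ × ℕ) :=
  pf.image fun b =>
    ((af.filter fun c => c.1 ⊆ b.1).image fun c => minB c.1,
     WithTop.untopD 0 ((af.filter fun c => b.2 ∈ c.1).image fun c => minB c.1).min)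

/-- The expected word of labels of the unique increasing maximal chain of the interval
`[0̂, [n]^p]` of the pointed partition poset:
`(1,2)¹ ⋯ (1,n)¹` if `p = 1`, and `(1,p)⁰ (1,2)¹ ⋯ (1,p-1)¹ (1,p+1)¹ ⋯ (1,n)¹` otherwise. -/
def expectedWordP (n p : ℕ) : List (ℕ × ℕ × Bool) :=
  let base := (List.range (n - 1)).map fun i => ((1 : ℕ), i + 2, true)
  if p = 1 then base else ((1 : ℕ), p, false) :: base.erase (1, p, true)

/-- Merge two words of labels, each with non-increasing first components, into a single
word with non-increasing first components. -/
def mergeByNu : List (ℕ × ℕ × Bool) → List (ℕ × ℕ × Bool) → List (ℕ × ℕ × Bool)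
  | [], ys => ys
  | xs, [] => xs
  | x :: xs, y :: ys =>
      if y.1 ≤ x.1 then x :: mergeByNu xs (y :: ys) else y :: mergeByNu (x :: xs) ys
termination_by xs ys => xs.length + ys.length

/-- The word of labels of a tree read along the reverse-minimal linear extension of its
internal vertices: the internal vertex `v` contributes `(ν (L v), ν (R v), color v)`, the
vertices being listed with non-increasing valencies (descendants first among equal
valencies). -/
def BT.rmword : BT → List (ℕ × ℕ × Bool)
  | BT.leaf _ => []
  | BT.node c l r => mergeByNu l.rmword r.rmword ++ [(l.nu, r.nu, c)]

/-- The word of labels of the saturated chain `c(F)` associated to a forest `F`, read along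
the reverse-minimal linear extension of the internal vertices of `F`. -/
noncomputable def forestWord (F : Finset BT) : List (ℕ × ℕ × Bool) :=
  (F.toList.map BT.rmword).foldr mergeByNu []

/-- `TLyn_{n,p}^•`: pointed Lyndon trees on `[n]` whose associated chain ends at `[n]^p`,
i.e. whose tracked pointed element is `p`. -/
abbrev TLynBullet (n p : ℕ) : Type :=
  {T : BT // T.normalized ∧ T.pLyn ∧ T.leaves = Finset.Icc 1 n ∧ T.ppt = p}

/-- The labeling `λ̃` of `Πₙ•` proposed by Bellier-Millès, Delcroix-Oger and Hoffbeck: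
the cover `u`-merging blocks with minima `a < b` in a pointed partition `π` with `|π|`
blocks is labeled `(b, a + n - |π|)` if `u = 0` and `(b, b + n - |π|)` if `u = 1`. -/
noncomputable def labT (n : ℕ) {A : Finset ℕ} (π π' : PPart A) : ℕ × ℕ :=
  let olds := π.1 \ π'.1
  let mins := olds.image fun b => minB b.1
  let a := WithTop.untopD 0 mins.min
  let b := WithBot.unbotD 0 mins.max
  if ∃ c ∈ olds, minB c.1 = a ∧ ∃ d ∈ π'.1 \ π.1, d.2 = c.2
  then (b, b + n - π.1.card)
  else (b, a + n - π.1.card)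

/-- The (strict) lexicographic order on `ℕ × ℕ`. -/
def ltT (x y : ℕ × ℕ) : Prop := x.1 < y.1 ∨ (x.1 = y.1 ∧ x.2 < y.2)

/-! In both posets a cover merges two blocks with minima `a < b`, and its label `(a, b)ᵘ`
records these minima and one bit `u` (which pointed element survives, resp. whether the weight
grows by one). Having the same underlying set partition is therefore a bisimulation between the
two posets that matches labels, and in each poset a cover out of a given element is determined
by its label. So the chains from `0̂` of either poset are in bijection, through their words of
labels, with one and the same set of words. -/

section LabelledChains

variable {α β L : Type*}

def IsLabelDeterministic (cov : α → α → Prop) (lab : α → α → L) : Prop :=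
  ∀ ⦃x y z⦄, cov x y → cov x z → lab x y = lab x z → y = z

def IsLabelSimulation (R : α → β → Prop) (covP : α → α → Prop) (labP : α → α → L)
    (covQ : β → β → Prop) (labQ : β → β → L) : Prop :=
  ∀ ⦃x y x'⦄, R x y → covP x x' → ∃ y', covQ y y' ∧ labQ y y' = labP x x' ∧ R x' y'

variable {covP : α → α → Prop} {labP : α → α → L} {covQ : β → β → Prop} {labQ : β → β → L}

theorem IsLabelDeterministic.eq_of_wordOf_eq (hdet : IsLabelDeterministic covP labP) :
    ∀ {x : α} {c d : List α}, (x :: c).IsChain covP → (x :: d).IsChain covP →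
      wordOf labP (x :: c) = wordOf labP (x :: d) → c = d
  | _, [], [], _, _, _ => rfl
  | _, [], _ :: _, _, _, h => nomatch h
  | _, _ :: _, [], _, _, h => nomatch h
  | _, y :: c, z :: d, hc, hd, h => by
    obtain ⟨hxy, hc⟩ := List.isChain_cons_cons.1 hc
    obtain ⟨hxz, hd⟩ := List.isChain_cons_cons.1 hd
    obtain ⟨hlab, h⟩ := List.cons_eq_cons.1 h
    obtain rfl := hdet hxy hxz hlab
    rw [hdet.eq_of_wordOf_eq hc hd h]

theorem IsLabelSimulation.exists_chain_wordOf_eq {R : α → β → Prop}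
    (hsim : IsLabelSimulation R covP labP covQ labQ) :
    ∀ {x : α} {y : β} {c : List α}, R x y → (x :: c).IsChain covP →
      ∃ d, (y :: d).IsChain covQ ∧ wordOf labQ (y :: d) = wordOf labP (x :: c)
  | _, _, [], _, _ => ⟨[], List.isChain_singleton _, rfl⟩
  | _, _, x' :: c, hxy, hc => by
    obtain ⟨hxx', hc⟩ := List.isChain_cons_cons.1 hc
    obtain ⟨y', hyy', hlab, hx'y'⟩ := hsim hxy hxx'
    obtain ⟨d, hd, hword⟩ := hsim.exists_chain_wordOf_eq hx'y' hc
    exact ⟨y' :: d, List.isChain_cons_cons.2 ⟨hyy', hd⟩, by simp only [wordOf, hlab, hword]⟩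

abbrev ChainsFrom (cov : α → α → Prop) (x : α) : Type _ :=
  {c : List α // c.head? = some x ∧ c.IsChain cov}

theorem IsLabelDeterministic.wordOf_injective (hdet : IsLabelDeterministic covP labP) (x : α) :
    Function.Injective fun c : ChainsFrom covP x => wordOf labP c.1 := by
  rintro ⟨c, hc, hchain⟩ ⟨d, hd, hdchain⟩ h
  obtain ⟨c, rfl⟩ := List.head?_eq_some_iff.1 hc
  obtain ⟨d, rfl⟩ := List.head?_eq_some_iff.1 hd
  simp only [Subtype.mk.injEq, List.cons.injEq, true_and]
  exact hdet.eq_of_wordOf_eq hchain hdchain h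

theorem IsLabelSimulation.range_wordOf_subset {R : α → β → Prop}
    (hsim : IsLabelSimulation R covP labP covQ labQ) {x : α} {y : β} (hxy : R x y) :
    Set.range (fun c : ChainsFrom covP x => wordOf labP c.1) ⊆
      Set.range fun d : ChainsFrom covQ y => wordOf labQ d.1 := by
  rintro _ ⟨⟨c, hc, hchain⟩, rfl⟩
  obtain ⟨c, rfl⟩ := List.head?_eq_some_iff.1 hc
  obtain ⟨d, hd, hword⟩ := hsim.exists_chain_wordOf_eq hxy hchain
  exact ⟨⟨y :: d, rfl, hd⟩, hword⟩

theorem exists_equiv_chainsFrom_wordOf_eq {R : α → β → Prop}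
    (hforth : IsLabelSimulation R covP labP covQ labQ)
    (hback : IsLabelSimulation (flip R) covQ labQ covP labP)
    (hdetP : IsLabelDeterministic covP labP) (hdetQ : IsLabelDeterministic covQ labQ)
    {x : α} {y : β} (hxy : R x y) :
    ∃ e : ChainsFrom covP x ≃ ChainsFrom covQ y, ∀ c, wordOf labQ (e c).1 = wordOf labP c.1 := by
  have hrange := (hforth.range_wordOf_subset hxy).antisymm (hback.range_wordOf_subset hxy)
  exact ⟨(Equiv.ofInjective _ (hdetP.wordOf_injective x)).trans
    ((Equiv.setCongr hrange).trans (Equiv.ofInjective _ (hdetQ.wordOf_injective y)).symm),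
    fun _ => Equiv.apply_ofInjective_symm (hdetQ.wordOf_injective y) _⟩

end LabelledChains

theorem minB_eq_min' {B : Finset ℕ} (h : B.Nonempty) : minB B = B.min' h := by
  rw [minB, ← Finset.coe_min' h, WithTop.untopD_coe]

theorem minB_mem {B : Finset ℕ} (h : B.Nonempty) : minB B ∈ B :=
  minB_eq_min' h ▸ B.min'_mem h

section Blocks

variable {δ : Type*}

def IsBlockFamily (P : Finset (Finset ℕ × δ)) : Prop :=
  (∀ b ∈ P, b.1.Nonempty) ∧ ∀ b ∈ P, ∀ b' ∈ P, b ≠ b' → Disjoint b.1 b'.1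

def mergeBlocks [DecidableEq δ] (P : Finset (Finset ℕ × δ)) (b₁ b₂ : Finset ℕ × δ) (x : δ) :
    Finset (Finset ℕ × δ) :=
  insert (b₁.1 ∪ b₂.1, x) ((P.erase b₁).erase b₂)

namespace IsBlockFamily

variable {P : Finset (Finset ℕ × δ)} (hP : IsBlockFamily P) {b b' b₁ b₂ : Finset ℕ × δ}
include hP

theorem eq_of_fst_eq (hb : b ∈ P) (hb' : b' ∈ P) (h : b.1 = b'.1) : b = b' := by
  by_contra hne
  obtain ⟨y, hy⟩ := hP.1 b hb
  exact Finset.disjoint_left.1 (hP.2 b hb b' hb' hne) hy (h ▸ hy)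

theorem eq_of_minB_eq (hb : b ∈ P) (hb' : b' ∈ P) (h : minB b.1 = minB b'.1) : b = b' := by
  by_contra hne
  exact Finset.disjoint_left.1 (hP.2 b hb b' hb' hne) (minB_mem (hP.1 b hb))
    (h ▸ minB_mem (hP.1 b' hb'))

variable [DecidableEq δ]

theorem union_notMem (hb₁ : b₁ ∈ P) (hb₂ : b₂ ∈ P) (hne : b₁ ≠ b₂) (x : δ) :
    (b₁.1 ∪ b₂.1, x) ∉ P := by
  intro hmem
  obtain ⟨y₁, hy₁⟩ := hP.1 b₁ hb₁
  obtain ⟨y₂, hy₂⟩ := hP.1 b₂ hb₂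
  by_cases h : (b₁.1 ∪ b₂.1, x) = b₁
  · have : y₂ ∈ b₁.1 := congrArg Prod.fst h ▸ Finset.mem_union_right _ hy₂
    exact Finset.disjoint_left.1 (hP.2 b₁ hb₁ b₂ hb₂ hne) this hy₂
  · exact Finset.disjoint_left.1 (hP.2 _ hmem b₁ hb₁ h) (Finset.mem_union_left _ hy₁) hy₁

theorem sdiff_mergeBlocks (hb₁ : b₁ ∈ P) (hb₂ : b₂ ∈ P) (hne : b₁ ≠ b₂) (x : δ) :
    P \ mergeBlocks P b₁ b₂ x = {b₁, b₂} := by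
  have hx := hP.union_notMem hb₁ hb₂ hne x
  ext c
  simp only [mergeBlocks, Finset.mem_sdiff, Finset.mem_insert, Finset.mem_erase,
    Finset.mem_singleton]
  constructor
  · rintro ⟨hc, hn⟩
    by_contra! h
    exact hn (Or.inr ⟨h.2, h.1, hc⟩)
  · rintro (rfl | rfl)
    · exact ⟨hb₁, by rintro (h | ⟨-, h, -⟩); exacts [hx (h ▸ hb₁), h rfl]⟩
    · exact ⟨hb₂, by rintro (h | ⟨h, -, -⟩); exacts [hx (h ▸ hb₂), h rfl]⟩

theorem mergeBlocks_sdiff (hb₁ : b₁ ∈ P) (hb₂ : b₂ ∈ P) (hne : b₁ ≠ b₂) (x : δ) :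
    mergeBlocks P b₁ b₂ x \ P = {(b₁.1 ∪ b₂.1, x)} := by
  rw [mergeBlocks, Finset.insert_sdiff_of_notMem _ (hP.union_notMem hb₁ hb₂ hne x),
    Finset.sdiff_eq_empty_iff_subset.2 ((Finset.erase_subset _ _).trans (Finset.erase_subset _ _))]
  rfl

theorem image_fst_erase (hb : b ∈ P) :
    (P.erase b).image Prod.fst = (P.image Prod.fst).erase b.1 := by
  ext s
  simp only [Finset.mem_image, Finset.mem_erase]
  constructor
  · rintro ⟨c, ⟨hcb, hc⟩, rfl⟩
    exact ⟨fun h => hcb (hP.eq_of_fst_eq hc hb h), c, hc, rfl⟩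
  · rintro ⟨hs, c, hc, rfl⟩
    exact ⟨c, ⟨fun h => hs (by rw [h]), hc⟩, rfl⟩

theorem image_fst_mergeBlocks (hb₁ : b₁ ∈ P) (hb₂ : b₂ ∈ P) (hne : b₁ ≠ b₂) (x : δ) :
    (mergeBlocks P b₁ b₂ x).image Prod.fst =
      insert (b₁.1 ∪ b₂.1) (((P.image Prod.fst).erase b₁.1).erase b₂.1) := by
  have hP₁ : IsBlockFamily (P.erase b₁) :=
    ⟨fun c hc => hP.1 c (Finset.mem_of_mem_erase hc),
      fun c hc c' hc' => hP.2 c (Finset.mem_of_mem_erase hc) c' (Finset.mem_of_mem_erase hc')⟩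
  rw [mergeBlocks, Finset.image_insert, hP₁.image_fst_erase (Finset.mem_erase.2 ⟨hne.symm, hb₂⟩),
    hP.image_fst_erase hb₁]

theorem mergeBlocks (hb₁ : b₁ ∈ P) (hb₂ : b₂ ∈ P) (x : δ) :
    IsBlockFamily (_root_.mergeBlocks P b₁ b₂ x) := by
  have hsub : (P.erase b₁).erase b₂ ⊆ P :=
    (Finset.erase_subset _ _).trans (Finset.erase_subset _ _)
  have hdisj : ∀ c ∈ (P.erase b₁).erase b₂, Disjoint c.1 (b₁.1 ∪ b₂.1) := by
    intro c hc
    obtain ⟨hc₂, hc₁, hc⟩ := by simpa only [Finset.mem_erase] using hc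
    exact Finset.disjoint_union_right.2 ⟨hP.2 c hc b₁ hb₁ hc₁, hP.2 c hc b₂ hb₂ hc₂⟩
  refine ⟨?_, ?_⟩
  · intro c hc
    rcases Finset.mem_insert.1 hc with rfl | hc
    · exact (hP.1 b₁ hb₁).mono Finset.subset_union_left
    · exact hP.1 c (hsub hc)
  · intro c hc c' hc' hcc'
    rcases Finset.mem_insert.1 hc with rfl | hc <;> rcases Finset.mem_insert.1 hc' with rfl | hc'
    · exact absurd rfl hcc'
    · exact (hdisj c' hc').symm
    · exact hdisj c hc
    · exact hP.2 c (hsub hc) c' (hsub hc') hcc'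

end IsBlockFamily

theorem biUnion_fst_mergeBlocks [DecidableEq δ] {P : Finset (Finset ℕ × δ)}
    {b₁ b₂ : Finset ℕ × δ} (hb₁ : b₁ ∈ P) (hb₂ : b₂ ∈ P) (hne : b₁ ≠ b₂) (x : δ) :
    (mergeBlocks P b₁ b₂ x).biUnion Prod.fst = P.biUnion Prod.fst := by
  conv_rhs => rw [← Finset.insert_erase hb₁, ← Finset.insert_erase (Finset.mem_erase.2 ⟨hne.symm, hb₂⟩)]
  simp only [mergeBlocks, Finset.biUnion_insert, Finset.union_assoc]

theorem untopD_min_image_minB_pair {b₁ b₂ : Finset ℕ × δ} [DecidableEq δ]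
    (h : minB b₁.1 < minB b₂.1) :
    WithTop.untopD 0 (({b₁, b₂} : Finset (Finset ℕ × δ)).image fun b => minB b.1).min
      = minB b₁.1 := by
  rw [Finset.image_insert, Finset.image_singleton, Finset.min_insert, Finset.min_singleton,
    min_eq_left (WithTop.coe_le_coe.2 h.le), WithTop.untopD_coe]

theorem unbotD_max_image_minB_pair {b₁ b₂ : Finset ℕ × δ} [DecidableEq δ]
    (h : minB b₁.1 < minB b₂.1) :
    WithBot.unbotD 0 (({b₁, b₂} : Finset (Finset ℕ × δ)).image fun b => minB b.1).max
      = minB b₂.1 := by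
  rw [Finset.image_insert, Finset.image_singleton, Finset.max_insert, Finset.max_singleton,
    max_eq_right (WithBot.coe_le_coe.2 h.le), WithBot.unbotD_coe]

end Blocks

theorem exists_mem_fst_eq_of_image_fst_eq {δ ε : Type*} {P : Finset (Finset ℕ × δ)}
    {Q : Finset (Finset ℕ × ε)} (h : P.image Prod.fst = Q.image Prod.fst)
    {b : Finset ℕ × δ} (hb : b ∈ P) : ∃ c ∈ Q, c.1 = b.1 :=
  Finset.mem_image.1 (h ▸ Finset.mem_image_of_mem _ hb)

section PartitionPosets

variable {A : Finset ℕ}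

theorem PPart.isBlockFamily (π : PPart A) : IsBlockFamily π.1 :=
  ⟨fun b hb => ⟨b.2, π.2.1 b hb⟩, π.2.2.1⟩

theorem WPart.isBlockFamily (σ : WPart A) : IsBlockFamily σ.1 :=
  ⟨fun b hb => Finset.card_pos.1 (b.2.zero_le.trans_lt (σ.2.1 b hb)), σ.2.2.1⟩

theorem PPart.snd_ne_snd (π : PPart A) {b₁ b₂ : Finset ℕ × ℕ} (hb₁ : b₁ ∈ π.1)
    (hb₂ : b₂ ∈ π.1) (hne : b₁ ≠ b₂) : b₁.2 ≠ b₂.2 := fun h =>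
  Finset.disjoint_left.1 (π.2.2.1 b₁ hb₁ b₂ hb₂ hne) (π.2.1 b₁ hb₁) (h ▸ π.2.1 b₂ hb₂)

def PPart.merge (π : PPart A) {b₁ b₂ : Finset ℕ × ℕ} (hb₁ : b₁ ∈ π.1) (hb₂ : b₂ ∈ π.1)
    (hne : b₁ ≠ b₂) {p : ℕ} (hp : p ∈ b₁.1 ∪ b₂.1) : PPart A :=
  ⟨mergeBlocks π.1 b₁ b₂ p, by
    refine ⟨fun b hb => ?_, (π.isBlockFamily.mergeBlocks hb₁ hb₂ p).2,
      (biUnion_fst_mergeBlocks hb₁ hb₂ hne p).trans π.2.2.2⟩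
    rcases Finset.mem_insert.1 hb with rfl | hb
    · exact hp
    · exact π.2.1 b (Finset.mem_of_mem_erase (Finset.mem_of_mem_erase hb))⟩

def WPart.merge (σ : WPart A) {c₁ c₂ : Finset ℕ × ℕ} (hc₁ : c₁ ∈ σ.1) (hc₂ : c₂ ∈ σ.1)
    (hne : c₁ ≠ c₂) (u : Bool) : WPart A :=
  ⟨mergeBlocks σ.1 c₁ c₂ (c₁.2 + c₂.2 + if u then 1 else 0), by
    refine ⟨fun c hc => ?_, (σ.isBlockFamily.mergeBlocks hc₁ hc₂ _).2,
      (biUnion_fst_mergeBlocks hc₁ hc₂ hne _).trans σ.2.2.2⟩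
    rcases Finset.mem_insert.1 hc with rfl | hc
    · have h₁ := σ.2.1 c₁ hc₁
      have h₂ := σ.2.1 c₂ hc₂
      rw [Finset.card_union_of_disjoint (σ.2.2.1 c₁ hc₁ c₂ hc₂ hne)]
      cases u <;> simp only [Bool.false_eq_true, if_true, if_false] <;> omega
    · exact σ.2.1 c (Finset.mem_of_mem_erase (Finset.mem_of_mem_erase hc))⟩

theorem labPP_eq_of_eq_mergeBlocks {π π' : PPart A} {b₁ b₂ : Finset ℕ × ℕ} {p : ℕ}
    (hb₁ : b₁ ∈ π.1) (hb₂ : b₂ ∈ π.1) (hlt : minB b₁.1 < minB b₂.1)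
    (h : π'.1 = mergeBlocks π.1 b₁ b₂ p) :
    labPP π π' = (minB b₁.1, minB b₂.1, decide (p = b₁.2)) := by
  have hne : b₁ ≠ b₂ := by rintro rfl; exact hlt.false
  have hold : π.1 \ π'.1 = {b₁, b₂} := h ▸ π.isBlockFamily.sdiff_mergeBlocks hb₁ hb₂ hne p
  have hnew : π'.1 \ π.1 = {(b₁.1 ∪ b₂.1, p)} :=
    h ▸ π.isBlockFamily.mergeBlocks_sdiff hb₁ hb₂ hne p
  simp only [labPP, hold, hnew, untopD_min_image_minB_pair hlt, unbotD_max_image_minB_pair hlt]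
  have hiff : (∃ b ∈ ({b₁, b₂} : Finset (Finset ℕ × ℕ)), minB b.1 = minB b₁.1 ∧
      ∃ d ∈ ({(b₁.1 ∪ b₂.1, p)} : Finset (Finset ℕ × ℕ)), d.2 = b.2) ↔ p = b₁.2 := by
    simp only [Finset.mem_insert, Finset.mem_singleton, exists_eq_left, exists_eq_or_imp,
      true_and, hlt.ne', false_and, or_false]
  simp only [hiff, Bool.if_false_right, Bool.and_true]

theorem labWP_eq_of_eq_mergeBlocks {σ σ' : WPart A} {c₁ c₂ : Finset ℕ × ℕ} {u : Bool}
    (hc₁ : c₁ ∈ σ.1) (hc₂ : c₂ ∈ σ.1) (hlt : minB c₁.1 < minB c₂.1)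
    (h : σ'.1 = mergeBlocks σ.1 c₁ c₂ (c₁.2 + c₂.2 + if u then 1 else 0)) :
    labWP σ σ' = (minB c₁.1, minB c₂.1, u) := by
  have hne : c₁ ≠ c₂ := by rintro rfl; exact hlt.false
  have hold : σ.1 \ σ'.1 = {c₁, c₂} := h ▸ σ.isBlockFamily.sdiff_mergeBlocks hc₁ hc₂ hne _
  have hnew : σ'.1 \ σ.1 = {(c₁.1 ∪ c₂.1, c₁.2 + c₂.2 + if u then 1 else 0)} :=
    h ▸ σ.isBlockFamily.mergeBlocks_sdiff hc₁ hc₂ hne _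
  simp only [labWP, hold, hnew, untopD_min_image_minB_pair hlt, unbotD_max_image_minB_pair hlt,
    Finset.sum_pair hne, Finset.sum_singleton]
  cases u <;> simp

theorem isLabelDeterministic_covPP : IsLabelDeterministic (covPP (A := A)) labPP := by
  rintro π π₁ π₂ ⟨b₁, hb₁, b₂, hb₂, hlt, p, hp, h₁⟩ ⟨b₁', hb₁', b₂', hb₂', hlt', p', hp', h₂⟩ hlab
  rw [labPP_eq_of_eq_mergeBlocks hb₁ hb₂ hlt h₁, labPP_eq_of_eq_mergeBlocks hb₁' hb₂' hlt' h₂,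
    Prod.mk.injEq, Prod.mk.injEq] at hlab
  obtain ⟨hmin₁, hmin₂, hpt⟩ := hlab
  obtain rfl := π.isBlockFamily.eq_of_minB_eq hb₁ hb₁' hmin₁
  obtain rfl := π.isBlockFamily.eq_of_minB_eq hb₂ hb₂' hmin₂
  have hne : b₂.2 ≠ b₁.2 := (π.snd_ne_snd hb₁ hb₂ fun h => hlt.ne (h ▸ rfl)).symm
  have hpp' : p = p' := by
    rcases hp with rfl | rfl <;> rcases hp' with rfl | rfl <;> simp_all
  exact Subtype.ext (h₁.trans (hpp' ▸ h₂.symm))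

theorem isLabelDeterministic_covWP : IsLabelDeterministic (covWP (A := A)) labWP := by
  rintro σ σ₁ σ₂ ⟨c₁, hc₁, c₂, hc₂, hlt, u, h₁⟩ ⟨c₁', hc₁', c₂', hc₂', hlt', u', h₂⟩ hlab
  rw [labWP_eq_of_eq_mergeBlocks hc₁ hc₂ hlt h₁, labWP_eq_of_eq_mergeBlocks hc₁' hc₂' hlt' h₂,
    Prod.mk.injEq, Prod.mk.injEq] at hlab
  obtain ⟨hmin₁, hmin₂, rfl⟩ := hlab
  obtain rfl := σ.isBlockFamily.eq_of_minB_eq hc₁ hc₁' hmin₁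
  obtain rfl := σ.isBlockFamily.eq_of_minB_eq hc₂ hc₂' hmin₂
  exact Subtype.ext (h₁.trans h₂.symm)

def SameBlocks (π : PPart A) (σ : WPart A) : Prop :=
  π.1.image Prod.fst = σ.1.image Prod.fst

theorem sameBlocks_botPP_botWP : SameBlocks (botPP A) (botWP A) := by
  simp only [SameBlocks, botPP, botWP, Finset.image_image]
  rfl

theorem isLabelSimulation_covPP_covWP :
    IsLabelSimulation (SameBlocks (A := A)) covPP labPP covWP labWP := by
  rintro π σ π' hπσ ⟨b₁, hb₁, b₂, hb₂, hlt, p, -, hπ'⟩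
  change π'.1 = mergeBlocks π.1 b₁ b₂ p at hπ'
  obtain ⟨c₁, hc₁, hcb₁⟩ := exists_mem_fst_eq_of_image_fst_eq hπσ hb₁
  obtain ⟨c₂, hc₂, hcb₂⟩ := exists_mem_fst_eq_of_image_fst_eq hπσ hb₂
  have hlt' : minB c₁.1 < minB c₂.1 := by rwa [hcb₁, hcb₂]
  have hne : b₁ ≠ b₂ := by rintro rfl; exact hlt.false
  have hne' : c₁ ≠ c₂ := by rintro rfl; exact hlt'.false
  refine ⟨σ.merge hc₁ hc₂ hne' (decide (p = b₁.2)), ⟨c₁, hc₁, c₂, hc₂, hlt', _, rfl⟩, ?_, ?_⟩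
  · rw [labWP_eq_of_eq_mergeBlocks hc₁ hc₂ hlt' rfl, labPP_eq_of_eq_mergeBlocks hb₁ hb₂ hlt hπ',
      hcb₁, hcb₂]
  · rw [SameBlocks, hπ', π.isBlockFamily.image_fst_mergeBlocks hb₁ hb₂ hne,
      WPart.merge, σ.isBlockFamily.image_fst_mergeBlocks hc₁ hc₂ hne', hπσ, hcb₁, hcb₂]

theorem isLabelSimulation_covWP_covPP :
    IsLabelSimulation (flip (SameBlocks (A := A))) covWP labWP covPP labPP := by
  rintro σ π σ' hπσ ⟨c₁, hc₁, c₂, hc₂, hlt, u, hσ'⟩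
  change σ'.1 = mergeBlocks σ.1 c₁ c₂ _ at hσ'
  obtain ⟨b₁, hb₁, hbc₁⟩ := exists_mem_fst_eq_of_image_fst_eq hπσ.symm hc₁
  obtain ⟨b₂, hb₂, hbc₂⟩ := exists_mem_fst_eq_of_image_fst_eq hπσ.symm hc₂
  have hlt' : minB b₁.1 < minB b₂.1 := by rwa [hbc₁, hbc₂]
  have hne : c₁ ≠ c₂ := by rintro rfl; exact hlt.false
  have hne' : b₁ ≠ b₂ := by rintro rfl; exact hlt'.false
  have hp : (if u then b₁.2 else b₂.2) ∈ b₁.1 ∪ b₂.1 := by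
    cases u
    · exact Finset.mem_union_right _ (π.2.1 b₂ hb₂)
    · exact Finset.mem_union_left _ (π.2.1 b₁ hb₁)
  refine ⟨π.merge hb₁ hb₂ hne' hp, ⟨b₁, hb₁, b₂, hb₂, hlt', _, ?_, rfl⟩, ?_, ?_⟩
  · cases u <;> simp
  · rw [labPP_eq_of_eq_mergeBlocks hb₁ hb₂ hlt' rfl, labWP_eq_of_eq_mergeBlocks hc₁ hc₂ hlt hσ',
      hbc₁, hbc₂]
    cases u <;> simp [π.snd_ne_snd hb₂ hb₁ hne'.symm]
  · rw [flip, SameBlocks, hσ', PPart.merge, π.isBlockFamily.image_fst_mergeBlocks hb₁ hb₂ hne',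
      σ.isBlockFamily.image_fst_mergeBlocks hc₁ hc₂ hne, hπσ, hbc₁, hbc₂]

end PartitionPosets

/-- There is a label-preserving bijection between the saturated chains
starting at `0̂` of the pointed partition poset `Πₙ•` (labeled by `λ•`, equivalently
`λ•₂`) and the saturated chains starting at `0̂` of the weighted partition poset `Πₙʷ`
(labeled by `λ_w`): corresponding chains have identical words of labels. -/
theorem label_preserving_bijection_of_chains (n : ℕ) :
    ∃ e : {c : List (PPart (Finset.Icc 1 n)) //
            c.head? = some (botPP (Finset.Icc 1 n)) ∧ c.Chain' covPP} ≃
          {c : List (WPart (Finset.Icc 1 n)) //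
            c.head? = some (botWP (Finset.Icc 1 n)) ∧ c.Chain' covWP},
      ∀ c, wordOf labWP (e c).1 = wordOf labPP c.1 :=
  exists_equiv_chainsFrom_wordOf_eq isLabelSimulation_covPP_covWP isLabelSimulation_covWP_covPP
    isLabelDeterministic_covPP isLabelDeterministic_covWP sameBlocks_botPP_botWP
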